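/- Let n ≥ 2 and let W = W(A_n) ≅ S_{n+1} be the Weyl group of the root system A_n = {ε_i − ε_j : i ≠ j, 1 ≤ i,j ≤ n+1}. A proper reflection subgroup Γ ⊊ W is large if and only if there exists a nonempty proper subset I ⊊ {1,…,n+1} such that the set of roots of Γ equals {ε_i − ε_j : i ≠ j, and either i,j ∈ I or i,j ∉ I}; equivalently, Γ = S_I × S_{I^c}. -/

import Mathlib

open RealInnerProductSpace

/-- The orthogonal reflection of `ℝ^n` in the hyperplane orthogonal to `α`. -/
noncomputable def sref {n : ℕ} (α : EuclideanSpace ℝ (Fin n)) :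
    EuclideanSpace ℝ (Fin n) ≃ₗᵢ[ℝ] EuclideanSpace ℝ (Fin n) :=
  Submodule.reflection ((Submodule.span ℝ {α})ᗮ)

/-- The standard basis vector `ε_i` of `ℝ^n`. -/
noncomputable def eps {n : ℕ} (i : Fin n) : EuclideanSpace ℝ (Fin n) :=
  EuclideanSpace.single i (1 : ℝ)

/-- The root system `A_n = {ε_i - ε_j : i ≠ j}` in `ℝ^{n+1}`. -/
def Aroots (n : ℕ) : Set (EuclideanSpace ℝ (Fin (n + 1))) :=
  {v | ∃ i j : Fin (n + 1), i ≠ j ∧ v = eps i - eps j}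

/-- A subgroup is a reflection subgroup (relative to the root set `Δ`) if it is generated
by the reflections `s_α`, `α ∈ Δ`, that it contains. -/
def IsReflectionSubgroup {n : ℕ} (Δ : Set (EuclideanSpace ℝ (Fin n)))
    (Γ : Subgroup (EuclideanSpace ℝ (Fin n) ≃ₗᵢ[ℝ] EuclideanSpace ℝ (Fin n))) : Prop :=
  Γ = Subgroup.closure (sref '' {α ∈ Δ | sref α ∈ Γ})

/-- `Γ` is large in the Weyl group of `Δ`: for any roots `α, β` with `β ≠ ±α` and
`(α,β) ≠ 0` there is a nonzero `γ ∈ ℝα + ℝβ` with `s_γ ∈ Γ`. -/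
def IsLargeSubgroup {n : ℕ} (Δ : Set (EuclideanSpace ℝ (Fin n)))
    (Γ : Subgroup (EuclideanSpace ℝ (Fin n) ≃ₗᵢ[ℝ] EuclideanSpace ℝ (Fin n))) : Prop :=
  ∀ α ∈ Δ, ∀ β ∈ Δ, β ≠ α → β ≠ -α → ⟪α, β⟫ ≠ 0 →
    ∃ γ : EuclideanSpace ℝ (Fin n), γ ≠ 0 ∧ γ ∈ Submodule.span ℝ {α, β} ∧ sref γ ∈ Γ

def relP {n : ℕ} (Γ : Subgroup (EuclideanSpace ℝ (Fin (n+1)) ≃ₗᵢ[ℝ] EuclideanSpace ℝ (Fin (n+1))))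
    (i j : Fin (n+1)) : Prop :=
  i = j ∨ sref (eps i - eps j) ∈ Γ
lemma sref_apply {n : ℕ} (α x : EuclideanSpace ℝ (Fin n)) :
    sref α x = x - ((2 * ⟪α, x⟫) / (‖α‖^2)) • α := by
  rw [sref, Submodule.reflection_orthogonal_apply, Submodule.reflection_singleton_apply]
  push_cast
  rw [neg_sub, two_smul, ← add_smul]
  norm_num
  congr 1
  ring
lemma eps_apply {n : ℕ} (i t : Fin n) : eps i t = if t = i then 1 else 0 :=
  EuclideanSpace.single_apply i 1 t
lemma inner_eps_left {n : ℕ} (i : Fin n) (x : EuclideanSpace ℝ (Fin n)) :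
    ⟪eps i, x⟫ = x i := by
  rw [eps, EuclideanSpace.inner_single_left]; simp
lemma inner_root_left {n : ℕ} (i j : Fin n) (x : EuclideanSpace ℝ (Fin n)) :
    ⟪eps i - eps j, x⟫ = x i - x j := by
  rw [inner_sub_left, inner_eps_left, inner_eps_left]
lemma norm_sq_root {n : ℕ} {i j : Fin n} (hij : i ≠ j) :
    ‖eps i - eps j‖^2 = 2 := by
  rw [← real_inner_self_eq_norm_sq, inner_root_left]
  have h1 : (eps i - eps j) i = 1 := by
    simp [PiLp.sub_apply, eps_apply, hij, hij.symm]
  have h2 : (eps i - eps j) j = -1 := by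
    simp [PiLp.sub_apply, eps_apply, hij, hij.symm]
  rw [h1, h2]; norm_num
lemma sref_root_apply {n : ℕ} {i j : Fin n} (hij : i ≠ j) (x : EuclideanSpace ℝ (Fin n))
    (t : Fin n) : sref (eps i - eps j) x t = x (Equiv.swap i j t) := by
  rw [sref_apply, inner_root_left, norm_sq_root hij]
  have : (2 * (x i - x j) / 2) = x i - x j := by ring
  rw [this]
  rcases eq_or_ne t i with rfl | hti
  · rw [Equiv.swap_apply_left]
    simp [PiLp.sub_apply, PiLp.smul_apply, eps_apply, hij, hij.symm]
  rcases eq_or_ne t j with rfl | htj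
  · rw [Equiv.swap_apply_right]
    simp [PiLp.sub_apply, PiLp.smul_apply, eps_apply, hij, hij.symm, hti]
  · rw [Equiv.swap_apply_of_ne_of_ne hti htj]
    simp [PiLp.sub_apply, PiLp.smul_apply, eps_apply, hti, htj]
lemma mem_W_perm {n : ℕ} {w : EuclideanSpace ℝ (Fin (n+1)) ≃ₗᵢ[ℝ] EuclideanSpace ℝ (Fin (n+1))}
    (hw : w ∈ Subgroup.closure (sref '' Aroots n)) :
    ∃ σ : Equiv.Perm (Fin (n+1)), ∀ x t, w x t = x (σ t) := by
  induction hw using Subgroup.closure_induction with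
  | mem g hg =>
    obtain ⟨α, ⟨i, j, hij, rfl⟩, rfl⟩ := hg
    exact ⟨Equiv.swap i j, fun x t => sref_root_apply hij x t⟩
  | one => exact ⟨1, fun x t => rfl⟩
  | mul a b ha hb iha ihb =>
    obtain ⟨σ, hσ⟩ := iha; obtain ⟨τ, hτ⟩ := ihb
    refine ⟨τ * σ, fun x t => ?_⟩
    have : (a * b) x = a (b x) := rfl
    rw [this, hσ, hτ]; rfl
  | inv a ha iha =>
    obtain ⟨σ, hσ⟩ := iha
    refine ⟨σ⁻¹, fun x t => ?_⟩
    have h1 : a (a⁻¹ x) = x := by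
      have : ⇑(a⁻¹) = a.symm := rfl
      rw [this, LinearIsometryEquiv.apply_symm_apply]
    have := hσ (a⁻¹ x) (σ⁻¹ t)
    rw [show σ (σ⁻¹ t) = t by simp, h1] at this
    exact this.symm
lemma sref_smul {n : ℕ} {c : ℝ} (hc : c ≠ 0) (α : EuclideanSpace ℝ (Fin n)) :
    sref (c • α) = sref α := by
  have : Submodule.span ℝ {c • α} = Submodule.span ℝ {α} :=
    Submodule.span_singleton_smul_eq (IsUnit.mk0 c hc) α
  unfold sref
  congr 1
  rw [this]
lemma exists_coord_ne_zero {n : ℕ} {γ : EuclideanSpace ℝ (Fin n)} (hγ : γ ≠ 0) :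
    ∃ t, γ t ≠ 0 := by
  by_contra h
  push_neg at h
  exact hγ (PiLp.ext h)
lemma sref_mem_W_root {n : ℕ} {γ : EuclideanSpace ℝ (Fin (n+1))} (hγ : γ ≠ 0)
    (hW : sref γ ∈ Subgroup.closure (sref '' Aroots n)) :
    ∃ (i j : Fin (n+1)) (c : ℝ), i ≠ j ∧ c ≠ 0 ∧ γ = c • (eps i - eps j) := by
  obtain ⟨σ, hσ⟩ := mem_W_perm hW
  have hns : ‖γ‖^2 ≠ 0 := by
    simpa using hγ
  -- key coordinate formula
  have key : ∀ (x : EuclideanSpace ℝ (Fin (n+1))) t,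
      x (σ t) = x t - (2 * ⟪γ, x⟫ / ‖γ‖^2) * γ t := by
    intro x t
    have h1 := hσ x t
    rw [sref_apply] at h1
    have h2 : (x - (2 * ⟪γ, x⟫ / ‖γ‖^2) • γ) t = x t - (2 * ⟪γ, x⟫ / ‖γ‖^2) * γ t := rfl
    rw [h2] at h1
    exact h1.symm
  have hneg : ∀ t, γ (σ t) = -γ t := by
    intro t
    have := key γ t
    rw [real_inner_self_eq_norm_sq] at this
    rw [this]
    field_simp
    ring
  obtain ⟨t, ht⟩ := exists_coord_ne_zero hγ
  set c : ℝ := 2 * γ t / ‖γ‖^2 with hc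
  have hcne : c ≠ 0 := by
    apply div_ne_zero _ hns
    simpa using ht
  have keyt : ∀ s, (eps t : EuclideanSpace ℝ (Fin (n+1))) (σ s) = eps t s - c * γ s := by
    intro s
    have := key (eps t) s
    rwa [real_inner_comm, inner_eps_left] at this
  set u := σ⁻¹ t with hu
  have hσu : σ u = t := σ.apply_symm_apply t
  have hut : u ≠ t := by
    intro h
    have h2 := keyt t
    rw [show σ t = t by rw [← h, hσu, h], eps_apply, if_pos rfl] at h2
    have h3 : c * γ t = 0 := by linarith
    rcases mul_eq_zero.mp h3 with h1 | h1
    · exact hcne h1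
    · exact ht h1
  have hγu : c * γ u = -1 := by
    have := keyt u
    rw [hσu] at this
    rw [eps_apply, eps_apply, if_pos rfl, if_neg hut] at this
    linarith
  have hγune : γ u ≠ 0 := by
    intro h; rw [h, mul_zero] at hγu; norm_num at hγu
  have hγut : γ u = -γ t := by
    have := hneg u
    rw [hσu] at this
    linarith
  have hsupp : ∀ s, s ≠ t → s ≠ u → γ s = 0 := by
    intro s hst hsu
    have hσs : σ s ≠ t := fun h => hsu (by rw [hu, ← h, show σ⁻¹ (σ s) = s by simp])
    have := keyt s
    rw [eps_apply, eps_apply, if_neg hσs, if_neg hst] at this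
    have : c * γ s = 0 := by linarith
    rcases mul_eq_zero.mp this with h1 | h1
    · exact absurd h1 hcne
    · exact h1
  refine ⟨t, u, γ t, Ne.symm hut, ht, ?_⟩
  refine PiLp.ext (fun s => ?_)
  have hrhs : (γ t • (eps t - eps u : EuclideanSpace ℝ (Fin (n+1)))) s
      = γ t * (eps t s - eps u s) := rfl
  rw [hrhs]
  rcases eq_or_ne s t with rfl | hst
  · rw [eps_apply, eps_apply, if_pos rfl, if_neg (Ne.symm hut)]; ring
  rcases eq_or_ne s u with rfl | hsu
  · rw [eps_apply, eps_apply, if_neg hst, if_pos rfl, hγut]; ring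
  · rw [eps_apply, eps_apply, if_neg hst, if_neg hsu, hsupp s hst hsu]; ring
lemma root_ne_zero {n : ℕ} {i j : Fin n} (hij : i ≠ j) :
    (eps i - eps j : EuclideanSpace ℝ (Fin n)) ≠ 0 := by
  intro h
  have h1 : (eps i - eps j : EuclideanSpace ℝ (Fin n)) i = 0 := by rw [h]; rfl
  have h2 : (eps i - eps j : EuclideanSpace ℝ (Fin n)) i = eps i i - eps j i := rfl
  rw [h2, eps_apply, eps_apply, if_pos rfl, if_neg hij] at h1
  norm_num at h1
lemma sref_symm {n : ℕ} (i j : Fin n) :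
    sref (eps j - eps i : EuclideanSpace ℝ (Fin n)) = sref (eps i - eps j) := by
  have : (eps j - eps i : EuclideanSpace ℝ (Fin n)) = (-1 : ℝ) • (eps i - eps j) := by module
  rw [this, sref_smul (by norm_num : (-1:ℝ) ≠ 0)]
lemma sref_conj {n : ℕ} {i j k : Fin (n+1)} (hij : i ≠ j) (hjk : j ≠ k) (hik : i ≠ k) :
    sref (eps i - eps k : EuclideanSpace ℝ (Fin (n+1))) =
      sref (eps i - eps j) * sref (eps j - eps k) * sref (eps i - eps j) := by
  have hswap : Equiv.swap i j * Equiv.swap j k * Equiv.swap i j = Equiv.swap i k := by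
    have h := Equiv.swap_mul_swap_mul_swap (x := k) (y := j) (z := i) hjk.symm hik.symm
    rwa [Equiv.swap_comm j i, Equiv.swap_comm k j] at h
  apply LinearIsometryEquiv.ext
  intro x
  refine PiLp.ext (fun t => ?_)
  have h1 : (sref (eps i - eps j) * sref (eps j - eps k) * sref (eps i - eps j)) x t
      = sref (eps i - eps j) (sref (eps j - eps k) (sref (eps i - eps j) x)) t := rfl
  rw [h1, sref_root_apply hij, sref_root_apply hjk, sref_root_apply hij, sref_root_apply hik]
  have h2 : Equiv.swap i k t = Equiv.swap i j (Equiv.swap j k (Equiv.swap i j t)) := by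
    rw [← hswap]; rfl
  rw [h2]
lemma rel_trans {n : ℕ} {Γ : Subgroup (EuclideanSpace ℝ (Fin (n+1)) ≃ₗᵢ[ℝ] EuclideanSpace ℝ (Fin (n+1)))}
    {i j k : Fin (n+1)} (hij : i ≠ j) (hjk : j ≠ k) (hik : i ≠ k)
    (h1 : sref (eps i - eps j) ∈ Γ) (h2 : sref (eps j - eps k) ∈ Γ) :
    sref (eps i - eps k : EuclideanSpace ℝ (Fin (n+1))) ∈ Γ := by
  rw [sref_conj hij hjk hik]
  exact mul_mem (mul_mem h1 h2) h1
lemma two_blocks {n : ℕ}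
    {Γ : Subgroup (EuclideanSpace ℝ (Fin (n+1)) ≃ₗᵢ[ℝ] EuclideanSpace ℝ (Fin (n+1)))}
    (hle : Γ ≤ Subgroup.closure (sref '' Aroots n))
    (hlarge : IsLargeSubgroup (Aroots n) Γ)
    {i j k : Fin (n+1)} (hij : i ≠ j) (hjk : j ≠ k) (hik : i ≠ k) :
    sref (eps i - eps j : EuclideanSpace ℝ (Fin (n+1))) ∈ Γ ∨
    sref (eps j - eps k : EuclideanSpace ℝ (Fin (n+1))) ∈ Γ ∨
    sref (eps i - eps k : EuclideanSpace ℝ (Fin (n+1))) ∈ Γ := by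
  set α : EuclideanSpace ℝ (Fin (n+1)) := eps i - eps j with hα
  set β : EuclideanSpace ℝ (Fin (n+1)) := eps j - eps k with hβ
  have hβi : β i = 0 := by
    show eps j i - eps k i = 0
    rw [eps_apply, eps_apply, if_neg hij, if_neg hik]; ring
  have hβj : β j = 1 := by
    show eps j j - eps k j = 1
    rw [eps_apply, eps_apply, if_pos rfl, if_neg hjk]; ring
  have hβα : β ≠ α := by
    intro h
    have : β i = α i := by rw [h]
    rw [hβi] at this
    have : (1:ℝ) - 0 = 0 := by
      have hαi : α i = 1 := by
        show eps i i - eps j i = 1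
        rw [eps_apply, eps_apply, if_pos rfl, if_neg hij]; ring
      rw [hαi] at this; linarith
    norm_num at this
  have hβnα : β ≠ -α := by
    intro h
    have h0 : β i = (-α) i := by rw [h]
    have hαi : α i = 1 := by
      show eps i i - eps j i = 1
      rw [eps_apply, eps_apply, if_pos rfl, if_neg hij]; ring
    have h1 : (-α) i = -(α i) := rfl
    rw [hβi, h1, hαi] at h0
    norm_num at h0
  have hinner : ⟪α, β⟫ ≠ 0 := by
    rw [inner_root_left, hβi, hβj]
    norm_num
  obtain ⟨γ, hγ0, hγspan, hγΓ⟩ := hlarge α ⟨i, j, hij, rfl⟩ β ⟨j, k, hjk, rfl⟩ hβα hβnα hinner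
  obtain ⟨p, q, c, hpq, hc, hγeq⟩ := sref_mem_W_root hγ0 (hle hγΓ)
  have hsrefγ : sref (eps p - eps q : EuclideanSpace ℝ (Fin (n+1))) ∈ Γ := by
    rw [← sref_smul hc (eps p - eps q), ← hγeq]; exact hγΓ
  -- support of γ
  obtain ⟨a, b, hab⟩ := Submodule.mem_span_pair.mp hγspan
  have hsupp : ∀ s, s ≠ i → s ≠ j → s ≠ k → γ s = 0 := by
    intro s hsi hsj hsk
    have h1 : γ s = a * α s + b * β s := by rw [← hab]; rfl
    have hαs : α s = 0 := by
      show eps i s - eps j s = 0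
      rw [eps_apply, eps_apply, if_neg hsi, if_neg hsj]; ring
    have hβs : β s = 0 := by
      show eps j s - eps k s = 0
      rw [eps_apply, eps_apply, if_neg hsj, if_neg hsk]; ring
    rw [h1, hαs, hβs]; ring
  have hmem : ∀ s : Fin (n+1), γ s ≠ 0 → (s = i ∨ s = j ∨ s = k) := by
    intro s hs
    by_contra h
    push_neg at h
    exact hs (hsupp s h.1 h.2.1 h.2.2)
  have hγp : γ p ≠ 0 := by
    have : γ p = c * (eps p p - eps q p) := by rw [hγeq]; rfl
    rw [this, eps_apply, eps_apply, if_pos rfl, if_neg hpq]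
    simpa using hc
  have hγq : γ q ≠ 0 := by
    have : γ q = c * (eps p q - eps q q) := by rw [hγeq]; rfl
    rw [this, eps_apply, eps_apply, if_neg hpq.symm, if_pos rfl]
    simpa using hc
  have hp := hmem p hγp
  have hq := hmem q hγq
  -- case analysis
  rcases hp with rfl | rfl | rfl <;> rcases hq with rfl | rfl | rfl
  · exact absurd rfl hpq
  · exact Or.inl hsrefγ
  · exact Or.inr (Or.inr hsrefγ)
  · exact Or.inl (by rw [← sref_symm]; exact hsrefγ)
  · exact absurd rfl hpq
  · exact Or.inr (Or.inl hsrefγ)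
  · exact Or.inr (Or.inr (by rw [← sref_symm]; exact hsrefγ))
  · exact Or.inr (Or.inl (by rw [← sref_symm]; exact hsrefγ))
  · exact absurd rfl hpq
lemma relP_refl {n : ℕ} {Γ : Subgroup (EuclideanSpace ℝ (Fin (n+1)) ≃ₗᵢ[ℝ] EuclideanSpace ℝ (Fin (n+1)))}
    (i : Fin (n+1)) : relP Γ i i := Or.inl rfl
lemma relP_symm {n : ℕ} {Γ : Subgroup (EuclideanSpace ℝ (Fin (n+1)) ≃ₗᵢ[ℝ] EuclideanSpace ℝ (Fin (n+1)))}
    {i j : Fin (n+1)} (h : relP Γ i j) : relP Γ j i := by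
  rcases h with rfl | h
  · exact Or.inl rfl
  · right; rw [sref_symm]; exact h
lemma relP_trans {n : ℕ} {Γ : Subgroup (EuclideanSpace ℝ (Fin (n+1)) ≃ₗᵢ[ℝ] EuclideanSpace ℝ (Fin (n+1)))}
    {i j k : Fin (n+1)} (h1 : relP Γ i j) (h2 : relP Γ j k) : relP Γ i k := by
  rcases eq_or_ne i j with rfl | hij
  · exact h2
  rcases eq_or_ne j k with rfl | hjk
  · exact h1
  rcases eq_or_ne i k with rfl | hik
  · exact Or.inl rfl
  rcases h1 with rfl | h1
  · exact absurd rfl hij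
  rcases h2 with rfl | h2
  · exact absurd rfl hjk
  exact Or.inr (rel_trans hij hjk hik h1 h2)
lemma pick_pair {X : Type*} (I : Set X) (a b c : X) :
    (a ∈ I ↔ b ∈ I) ∨ (b ∈ I ↔ c ∈ I) ∨ (a ∈ I ↔ c ∈ I) := by tauto

/-- A proper reflection subgroup `Γ` of `W(A_n) ≅ S_{n+1}` (`n ≥ 2`) is large iff there is
a nonempty proper subset `I ⊊ {1,…,n+1}` such that the roots of `Γ` are exactly the
`ε_i - ε_j` with `i ≠ j` and `i, j ∈ I` or `i, j ∉ I` (i.e. `Γ = S_I × S_{I^c}`). -/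
theorem large_subgroups_of_WAn (n : ℕ) (hn : 2 ≤ n)
    (Γ : Subgroup (EuclideanSpace ℝ (Fin (n + 1)) ≃ₗᵢ[ℝ] EuclideanSpace ℝ (Fin (n + 1))))
    (hle : Γ ≤ Subgroup.closure (sref '' Aroots n))
    (hrefl : IsReflectionSubgroup (Aroots n) Γ)
    (hproper : Γ ≠ Subgroup.closure (sref '' Aroots n)) :
    IsLargeSubgroup (Aroots n) Γ ↔
      ∃ I : Set (Fin (n + 1)), I.Nonempty ∧ I ≠ Set.univ ∧
        {α ∈ Aroots n | sref α ∈ Γ} =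
          {v | ∃ i j : Fin (n + 1), i ≠ j ∧
            ((i ∈ I ∧ j ∈ I) ∨ (i ∉ I ∧ j ∉ I)) ∧ v = eps i - eps j} := by
  constructor
  · -- large → block structure
    intro hlarge
    have hex : ∃ i0 j0 : Fin (n+1), i0 ≠ j0 ∧ sref (eps i0 - eps j0) ∉ Γ := by
      by_contra h
      push_neg at h
      apply hproper
      refine le_antisymm hle ((Subgroup.closure_le Γ).mpr ?_)
      rintro g ⟨α, ⟨i, j, hij, rfl⟩, rfl⟩
      exact h i j hij
    obtain ⟨i0, j0, hi0j0, hnot⟩ := hex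
    have hnrel : ¬ relP Γ j0 i0 := by
      intro h
      rcases relP_symm h with rfl | h
      · exact hi0j0 rfl
      · exact hnot h
    refine ⟨{m | relP Γ m i0}, ⟨i0, relP_refl i0⟩, ?_, ?_⟩
    · intro h
      have : j0 ∈ {m | relP Γ m i0} := by rw [h]; trivial
      exact hnrel this
    · ext v
      constructor
      · rintro ⟨⟨i, j, hij, rfl⟩, hmem⟩
        refine ⟨i, j, hij, ?_, rfl⟩
        have hPij : relP Γ i j := Or.inr hmem
        by_cases hi : relP Γ i i0
        · exact Or.inl ⟨hi, relP_trans (relP_symm hPij) hi⟩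
        · refine Or.inr ⟨hi, fun hj => hi (relP_trans hPij hj)⟩
      · rintro ⟨i, j, hij, hblk, rfl⟩
        refine ⟨⟨i, j, hij, rfl⟩, ?_⟩
        have hPij : relP Γ i j := by
          rcases hblk with ⟨hi, hj⟩ | ⟨hi, hj⟩
          · exact relP_trans hi (relP_symm hj)
          · have hii0 : i ≠ i0 := fun h => hi (h ▸ relP_refl i0)
            have hji0 : j ≠ i0 := fun h => hj (h ▸ relP_refl i0)
            rcases two_blocks hle hlarge hij hji0 hii0 with h | h | h
            · exact Or.inr h
            · exact absurd (Or.inr h) hj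
            · exact absurd (Or.inr h) hi
        rcases hPij with rfl | h
        · exact absurd rfl hij
        · exact h
  · -- block structure → large
    rintro ⟨I, hIne, hIuniv, hset⟩
    have hblockmem : ∀ p q : Fin (n+1), p ≠ q → (p ∈ I ↔ q ∈ I) →
        sref (eps p - eps q : EuclideanSpace ℝ (Fin (n+1))) ∈ Γ := by
      intro p q hpq hiff
      have hv : (eps p - eps q : EuclideanSpace ℝ (Fin (n+1))) ∈
          {α ∈ Aroots n | sref α ∈ Γ} := by
        rw [hset]
        exact ⟨p, q, hpq, by tauto, rfl⟩
      exact hv.2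
    rintro α ⟨i, j, hij, rfl⟩ β ⟨k, l, hkl, rfl⟩ hβα hβnα hinner
    have hshare : i = k ∨ i = l ∨ j = k ∨ j = l := by
      by_contra h
      push_neg at h
      obtain ⟨h1, h2, h3, h4⟩ := h
      apply hinner
      rw [inner_root_left]
      have e1 : (eps k - eps l : EuclideanSpace ℝ (Fin (n+1))) i
          = eps k i - eps l i := rfl
      have e2 : (eps k - eps l : EuclideanSpace ℝ (Fin (n+1))) j
          = eps k j - eps l j := rfl
      rw [e1, e2, eps_apply, eps_apply, eps_apply, eps_apply,
        if_neg h1, if_neg h2, if_neg h3, if_neg h4]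
      ring
    rcases hshare with rfl | rfl | rfl | rfl
    · -- i = k : α = ε_i - ε_j, β = ε_i - ε_l
      have hjl : j ≠ l := fun h => hβα (by rw [h])
      rcases pick_pair I i j l with hiff | hiff | hiff
      · exact ⟨eps i - eps j, root_ne_zero hij,
          Submodule.mem_span_pair.mpr ⟨1, 0, by module⟩, hblockmem i j hij hiff⟩
      · exact ⟨eps j - eps l, root_ne_zero hjl,
          Submodule.mem_span_pair.mpr ⟨-1, 1, by module⟩, hblockmem j l hjl hiff⟩
      · exact ⟨eps i - eps l, root_ne_zero hkl,
          Submodule.mem_span_pair.mpr ⟨0, 1, by module⟩, hblockmem i l hkl hiff⟩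
    · -- i = l : α = ε_i - ε_j, β = ε_k - ε_i
      have hkj : k ≠ j := fun h => hβnα (by rw [h]; module)
      have hki : k ≠ i := hkl
      rcases pick_pair I k i j with hiff | hiff | hiff
      · exact ⟨eps k - eps i, root_ne_zero hki,
          Submodule.mem_span_pair.mpr ⟨0, 1, by module⟩, hblockmem k i hki hiff⟩
      · exact ⟨eps i - eps j, root_ne_zero hij,
          Submodule.mem_span_pair.mpr ⟨1, 0, by module⟩, hblockmem i j hij hiff⟩
      · exact ⟨eps k - eps j, root_ne_zero hkj,
          Submodule.mem_span_pair.mpr ⟨1, 1, by module⟩, hblockmem k j hkj hiff⟩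
    · -- j = k : α = ε_i - ε_j, β = ε_j - ε_l
      have hil : i ≠ l := fun h => hβnα (by rw [h]; module)
      rcases pick_pair I i j l with hiff | hiff | hiff
      · exact ⟨eps i - eps j, root_ne_zero hij,
          Submodule.mem_span_pair.mpr ⟨1, 0, by module⟩, hblockmem i j hij hiff⟩
      · exact ⟨eps j - eps l, root_ne_zero hkl,
          Submodule.mem_span_pair.mpr ⟨0, 1, by module⟩, hblockmem j l hkl hiff⟩
      · exact ⟨eps i - eps l, root_ne_zero hil,
          Submodule.mem_span_pair.mpr ⟨1, 1, by module⟩, hblockmem i l hil hiff⟩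
    · -- j = l : α = ε_i - ε_j, β = ε_k - ε_j
      have hik : i ≠ k := fun h => hβα (by rw [h])
      rcases pick_pair I i k j with hiff | hiff | hiff
      · exact ⟨eps i - eps k, root_ne_zero hik,
          Submodule.mem_span_pair.mpr ⟨1, -1, by module⟩, hblockmem i k hik hiff⟩
      · exact ⟨eps k - eps j, root_ne_zero hkl,
          Submodule.mem_span_pair.mpr ⟨0, 1, by module⟩, hblockmem k j hkl hiff⟩
      · exact ⟨eps i - eps j, root_ne_zero hij,
          Submodule.mem_span_pair.mpr ⟨1, 0, by module⟩, hblockmem i j hij hiff⟩
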